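/- Let f : X × X → ℝ be a negative definite kernel with f(x,x) = 0 for all x. Fix a basepoint x₀ ∈ X. Then the kernel g(x,y) := −½ ( f(x,y) − f(x,x₀) − f(y,x₀) ) is positive definite. -/
import Mathlib


def IsPosDefKernel {X : Type*} (k : X → X → ℝ) : Prop :=
  (∀ x y, k x y = k y x) ∧
  ∀ (m : ℕ) (x : Fin m → X) (c : Fin m → ℝ),
    0 ≤ ∑ i, ∑ j, c i * c j * k (x i) (x j)

def IsNegDefKernel {X : Type*} (f : X → X → ℝ) : Prop :=
  (∀ x y, f x y = f y x) ∧
  ∀ (m : ℕ) (x : Fin m → X) (c : Fin m → ℝ), (∑ i, c i) = 0 →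
    (∑ i, ∑ j, c i * c j * f (x i) (x j)) ≤ 0

theorem schoenberg_centering_posdef
    {X : Type*} (f : X → X → ℝ) (hf : IsNegDefKernel f)
    (hdiag : ∀ x, f x x = 0) (x₀ : X) :
    IsPosDefKernel (fun x y => -(1 / 2) * (f x y - f x x₀ - f y x₀)) := by
  obtain ⟨hsym, hneg⟩ := hf
  constructor
  · intro x y
    simp only
    rw [hsym x y]
    ring
  · intro m x c
    obtain ⟨s, hs⟩ : ∃ s : ℝ, s = ∑ i, c i := ⟨_, rfl⟩
    obtain ⟨T, hT⟩ : ∃ T : ℝ, T = ∑ i, c i * f (x i) x₀ := ⟨_, rfl⟩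
    obtain ⟨S, hS⟩ : ∃ S : ℝ, S = ∑ i, ∑ j, c i * c j * f (x i) (x j) := ⟨_, rfl⟩
    have hsum : (∑ i, (Fin.snoc c (-s) : Fin (m+1) → ℝ) i) = (0 : ℝ) := by
      rw [Fin.sum_univ_castSucc]
      simp [hs]
    have key := hneg (m + 1) (Fin.snoc x x₀) (Fin.snoc c (-s)) hsum
    have factor : ∀ (A : Fin m → ℝ), (∑ i, ∑ j, c i * c j * A i) = s * (∑ i, c i * A i) := by
      intro A
      rw [Finset.mul_sum]
      refine Finset.sum_congr rfl (fun i _ => ?_)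
      rw [show s * (c i * A i) = (c i * A i) * s from mul_comm _ _, hs, Finset.mul_sum]
      exact Finset.sum_congr rfl (fun j _ => by ring)
    have hT2 : (∑ j, c j * f x₀ (x j)) = T := by
      rw [hT]
      exact Finset.sum_congr rfl (fun j _ => by rw [hsym x₀ (x j)])
    have hkey : S - s * T - s * T ≤ 0 := by
      have inner : ∀ (b : ℝ) (y : X), (∑ j : Fin (m+1),
          b * (Fin.snoc c (-s) : Fin (m+1) → ℝ) j * f y ((Fin.snoc x x₀ : Fin (m+1) → X) j))
          = (∑ j : Fin m, b * c j * f y (x j)) + b * (-s) * f y x₀ := by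
        intro b y
        rw [Fin.sum_univ_castSucc]
        simp only [Fin.snoc_castSucc, Fin.snoc_last]
      have expand : (∑ i : Fin (m+1), ∑ j : Fin (m+1),
          (Fin.snoc c (-s) : Fin (m+1) → ℝ) i * (Fin.snoc c (-s) : Fin (m+1) → ℝ) j *
            f ((Fin.snoc x x₀ : Fin (m+1) → X) i) ((Fin.snoc x x₀ : Fin (m+1) → X) j))
          = S - s * T - s * T := by
        rw [Fin.sum_univ_castSucc]
        simp only [Fin.snoc_castSucc, Fin.snoc_last]
        rw [Finset.sum_congr rfl (fun i (_ : i ∈ Finset.univ) => inner (c i) (x i)),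
          inner (-s) x₀, Finset.sum_add_distrib, hdiag]
        have e1 : (∑ i, c i * -s * f (x i) x₀) = -(s * T) := by
          rw [hT, Finset.mul_sum, ← Finset.sum_neg_distrib]
          exact Finset.sum_congr rfl (fun i _ => by ring)
        have e2 : (∑ j, -s * c j * f x₀ (x j)) = -(s * T) := by
          rw [← hT2, Finset.mul_sum, ← Finset.sum_neg_distrib]
          exact Finset.sum_congr rfl (fun j _ => by ring)
        rw [e1, e2, ← hS]
        ring
      linarith [expand ▸ key]
    have goal_eq : (∑ i, ∑ j, c i * c j *
        ((fun x y => -(1 / 2) * (f x y - f x x₀ - f y x₀)) (x i) (x j)))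
        = -(1/2) * (S - s * T - s * T) := by
      simp only
      have h3 : ∀ i j : Fin m, c i * c j * (-(1 / 2) * (f (x i) (x j) - f (x i) x₀ - f (x j) x₀))
          = -(1/2) * (c i * c j * f (x i) (x j)) + (1/2) * (c i * c j * f (x i) x₀)
            + (1/2) * (c i * c j * f (x j) x₀) := fun i j => by ring
      rw [Finset.sum_congr rfl (fun i (_ : i ∈ Finset.univ) => by
        rw [Finset.sum_congr rfl (fun j (_ : j ∈ Finset.univ) => h3 i j),
          Finset.sum_add_distrib, Finset.sum_add_distrib, ← Finset.mul_sum,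
          ← Finset.mul_sum, ← Finset.mul_sum])]
      rw [Finset.sum_add_distrib, Finset.sum_add_distrib, ← Finset.mul_sum,
        ← Finset.mul_sum, ← Finset.mul_sum, ← hS]
      have e3 : (∑ i, ∑ j, c i * c j * f (x i) x₀) = s * T := by
        rw [factor (fun i => f (x i) x₀), ← hT]
      have e4 : (∑ i, ∑ j, c i * c j * f (x j) x₀) = s * T := by
        rw [Finset.sum_comm]
        rw [show (∑ j, ∑ i, c i * c j * f (x j) x₀) = ∑ j, ∑ i, c j * c i * f (x j) x₀ from
          Finset.sum_congr rfl (fun j _ => Finset.sum_congr rfl (fun i _ => by ring))]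
        rw [factor (fun j => f (x j) x₀), ← hT]
      rw [e3, e4]
      ring
    rw [goal_eq]
    linarith
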